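/- Let (A, ↖, ↗, ↙, ↘) be a quadri-algebra. Then on the vector space A ⊕ A with dendriform operations (x₁, y₁) ∧ (x₂, y₂) := (x₁∧x₂, x₁↗y₂ + y₁↖x₂) and (x₁, y₁) ∨ (x₂, y₂) := (x₁∨x₂, x₁↘y₂ + y₁↙x₂) (the semidirect sum A_v ⋉ A via the bimodule (A, L_↗, R_↖, L_↘, R_↙)), the linear operator N((x, y)) := (λ₁y + λ₂x, λ₃x + λ₄y) is a Nijenhuis operator for any scalars λ₁, λ₂, λ₃, λ₄, i.e., N(u)∘N(v) = N(N(u)∘v + u∘N(v) − N(u∘v)) for ∘ ∈ {∧, ∨}. -/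

import Mathlib

/-- The nine quadri-algebra axioms for four binary operations
`nw = ↖`, `ne = ↗`, `sw = ↙`, `se = ↘`. -/
def QuadriEqs {A : Type*} [Add A] (nw ne sw se : A → A → A) : Prop :=
  ∀ x y z : A,
    nw (nw x y) z = nw x (nw y z + ne y z + sw y z + se y z) ∧
    nw (ne x y) z = ne x (nw y z + sw y z) ∧
    ne (nw x y + ne x y) z = ne x (ne y z + se y z) ∧
    nw (sw x y) z = sw x (nw y z + ne y z) ∧
    nw (se x y) z = se x (nw y z) ∧
    ne (sw x y + se x y) z = se x (ne y z) ∧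
    sw (nw x y + sw x y) z = sw x (sw y z + se y z) ∧
    sw (ne x y + se x y) z = se x (sw y z) ∧
    se (nw x y + ne x y + sw x y + se x y) z = se x (se y z)

/-- The `∧`-operation of the semidirect sum `A_v ⋉ A` via the bimodule
`(A, L_↗, R_↖, L_↘, R_↙)`: `(x₁,y₁) ∧ (x₂,y₂) = (x₁∧x₂, x₁↗y₂ + y₁↖x₂)`. -/
def sdWedge {F A : Type*} [Field F] [AddCommGroup A] [Module F A]
    (nw ne : A →ₗ[F] A →ₗ[F] A) : A × A → A × A → A × A :=
  fun u v => (nw u.1 v.1 + ne u.1 v.1, ne u.1 v.2 + nw u.2 v.1)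

/-- The `∨`-operation of the semidirect sum `A_v ⋉ A`:
`(x₁,y₁) ∨ (x₂,y₂) = (x₁∨x₂, x₁↘y₂ + y₁↙x₂)`. -/
def sdVee {F A : Type*} [Field F] [AddCommGroup A] [Module F A]
    (sw se : A →ₗ[F] A →ₗ[F] A) : A × A → A × A → A × A :=
  fun u v => (sw u.1 v.1 + se u.1 v.1, se u.1 v.2 + sw u.2 v.1)

/- `sdWedge p q u v = R(v) u + L(u) v`, where `R(v) = p(·, v.1) × p(·, v.1)` and
`L(u) = q(u.1, ·) × q(u.1, ·)` act diagonally on `A × A`. An operator `N` commuting with every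
`R(v)` satisfies `N u * N v = N (u * N v)` and `N (N u * v) = N² (u * v)`, which is exactly the
Nijenhuis identity, and symmetrically for `L(u)`; the identity is additive in the product, and
`N = (λ₂ λ₁; λ₃ λ₄) ⊗ id` commutes with every diagonal map `f × f`. -/

section Nijenhuis

variable {K V : Type*} [Ring K] [AddCommGroup V] [Module K V]

def IsNijenhuis (N : V →ₗ[K] V) (m : V → V → V) : Prop :=
  ∀ u v, m (N u) (N v) = N (m (N u) v + m u (N v) - N (m u v))

theorem IsNijenhuis.add {N : V →ₗ[K] V} {m₁ m₂ : V → V → V} (h₁ : IsNijenhuis N m₁)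
    (h₂ : IsNijenhuis N m₂) : IsNijenhuis N (fun u v => m₁ u v + m₂ u v) := by
  intro u v
  dsimp only
  rw [h₁, h₂, ← map_add, map_add N (m₁ u v)]
  congr 1
  abel

theorem isNijenhuis_of_commute_right {N : V →ₗ[K] V} (T : V → V →ₗ[K] V)
    (hT : ∀ v, Commute N (T v)) : IsNijenhuis N (fun u v => T v u) := by
  intro u v
  have h₁ : T (N v) (N u) = N (T (N v) u) := (LinearMap.congr_fun (hT (N v)) u).symm
  have h₂ : T v (N u) = N (T v u) := (LinearMap.congr_fun (hT v) u).symm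
  simp only [h₁, h₂, add_sub_cancel_left]

theorem isNijenhuis_of_commute_left {N : V →ₗ[K] V} (T : V → V →ₗ[K] V)
    (hT : ∀ u, Commute N (T u)) : IsNijenhuis N (fun u v => T u v) := by
  intro u v
  have h₁ : T (N u) (N v) = N (T (N u) v) := (LinearMap.congr_fun (hT (N u)) v).symm
  have h₂ : T u (N v) = N (T u v) := (LinearMap.congr_fun (hT u) v).symm
  simp only [h₁, h₂, add_sub_cancel_right]

end Nijenhuis

section SemidirectSum

variable {F A : Type*} [Field F] [AddCommGroup A] [Module F A]

theorem sdWedge_eq_prodMap_add_prodMap (p q : A →ₗ[F] A →ₗ[F] A) :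
    sdWedge p q = fun u v => (p.flip v.1).prodMap (p.flip v.1) u + (q u.1).prodMap (q u.1) v := by
  funext u v
  ext <;> simp only [sdWedge, Prod.fst_add, Prod.snd_add, LinearMap.prodMap_apply,
    LinearMap.flip_apply, add_comm]

theorem isNijenhuis_sdWedge {N : A × A →ₗ[F] A × A}
    (hN : ∀ f : A →ₗ[F] A, Commute N (f.prodMap f)) (p q : A →ₗ[F] A →ₗ[F] A) :
    IsNijenhuis N (sdWedge p q) := by
  rw [sdWedge_eq_prodMap_add_prodMap]
  exact (isNijenhuis_of_commute_right _ fun v => hN _).add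
    (isNijenhuis_of_commute_left _ fun u => hN _)

theorem sdVee_eq_sdWedge (p q : A →ₗ[F] A →ₗ[F] A) : sdVee p q = sdWedge p q := rfl

def matrixSmul (a b c d : F) : A × A →ₗ[F] A × A :=
  (a • LinearMap.fst F A A + b • LinearMap.snd F A A).prod
    (c • LinearMap.fst F A A + d • LinearMap.snd F A A)

theorem commute_matrixSmul_prodMap (a b c d : F) (f : A →ₗ[F] A) :
    Commute (matrixSmul a b c d) (f.prodMap f) := by
  ext <;> simp [matrixSmul]

end SemidirectSum

theorem nijenhuis_on_semidirect_sum_general {F A : Type*} [Field F] [AddCommGroup A] [Module F A]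
    (nw ne sw se : A →ₗ[F] A →ₗ[F] A)
    (l1 l2 l3 l4 : F)
    (N : A × A → A × A)
    (hN : ∀ u : A × A, N u = (l1 • u.2 + l2 • u.1, l3 • u.1 + l4 • u.2)) :
    ∀ u v : A × A,
      sdWedge nw ne (N u) (N v)
          = N (sdWedge nw ne (N u) v + sdWedge nw ne u (N v) - N (sdWedge nw ne u v)) ∧
      sdVee sw se (N u) (N v)
          = N (sdVee sw se (N u) v + sdVee sw se u (N v) - N (sdVee sw se u v)) := by
  have hNl : N = matrixSmul l2 l1 l3 l4 := by
    funext u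
    simp [hN, matrixSmul, add_comm]
  subst hNl
  have hcomm := commute_matrixSmul_prodMap (A := A) l2 l1 l3 l4
  rw [sdVee_eq_sdWedge]
  exact fun u v => ⟨isNijenhuis_sdWedge hcomm nw ne u v, isNijenhuis_sdWedge hcomm sw se u v⟩

/-- for any scalars `λ₁,λ₂,λ₃,λ₄`, the operator
`N((x,y)) = (λ₁y + λ₂x, λ₃x + λ₄y)` is a Nijenhuis operator on the semidirect
sum `A_v ⋉ A` of a quadri-algebra. -/
theorem nijenhuis_on_semidirect_sum {F A : Type*} [Field F] [AddCommGroup A] [Module F A]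
    (nw ne sw se : A →ₗ[F] A →ₗ[F] A)
    (hq : QuadriEqs (fun x y => nw x y) (fun x y => ne x y)
      (fun x y => sw x y) (fun x y => se x y))
    (l1 l2 l3 l4 : F)
    (N : A × A → A × A)
    (hN : ∀ u : A × A, N u = (l1 • u.2 + l2 • u.1, l3 • u.1 + l4 • u.2)) :
    ∀ u v : A × A,
      sdWedge nw ne (N u) (N v)
          = N (sdWedge nw ne (N u) v + sdWedge nw ne u (N v) - N (sdWedge nw ne u v)) ∧
      sdVee sw se (N u) (N v)
          = N (sdVee sw se (N u) v + sdVee sw se u (N v) - N (sdVee sw se u v)) :=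
  nijenhuis_on_semidirect_sum_general nw ne sw se l1 l2 l3 l4 N hN
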